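/- (Basic inequality and cone condition for the lasso.) Under the setting of the deterministic lasso error bound: let v = β̂ − β⋆, and let v_S, v_{S^c} denote the restrictions of v to the support S of β⋆ and its complement. If ‖γ̂ − Γ̂β⋆‖_∞ ≤ λ/4 and β̂ minimizes β ↦ −2βᵀγ̂ + βᵀΓ̂β + λ‖β‖₁ over ℝ^p with Γ̂ positive semidefinite on the cone {v : ‖v_{S^c}‖₁ ≤ 3‖v_S‖₁}, then 0 ≤ vᵀΓ̂v ≤ (3λ/2)‖v_S‖₁ − (λ/2)‖v_{S^c}‖₁, and consequently ‖v_{S^c}‖₁ ≤ 3‖v_S‖₁. -/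

import Mathlib

/-!
Write `v = β̂ - β⋆`. Comparing the objective at `β̂ = β⋆ + v` with its value at `β⋆`, the linear
term is controlled by Hölder's inequality and the `ℓ¹` penalty by the triangle inequality, which is
exact off the support `S` of `β⋆`; this is the basic inequality. Nonnegativity of `vᵀΓ̂v` holds
because a minimizer exists: along any ray `β̂ + t w` the objective grows at most linearly plus
`t² wᵀΓ̂w`, so a negative curvature would drive it below its minimum. Together the two bounds force
the cone condition.
-/

open Finset Matrix

noncomputable def l1 {n : ℕ} (v : Fin n → ℝ) : ℝ := ∑ i, |v i|
noncomputable def linf {n : ℕ} (v : Fin n → ℝ) : ℝ := ⨆ i, |v i|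

def restrict {n : ℕ} (S : Finset (Fin n)) (v : Fin n → ℝ) : Fin n → ℝ :=
  fun i => if i ∈ S then v i else 0

theorem nonneg_of_forall_pos_mul_add_sq_mul_nonneg {a c : ℝ}
    (h : ∀ t : ℝ, 0 < t → 0 ≤ t * a + t ^ 2 * c) : 0 ≤ c := by
  by_contra! hc
  have ht : 0 < (|a| + 1) / -c := div_pos (by positivity) (neg_pos.2 hc)
  have hmul : (|a| + 1) / -c * c = -(|a| + 1) := by
    rw [div_neg, neg_mul, div_mul_cancel₀ _ hc.ne]
  have hval := h _ ht
  nlinarith [le_abs_self a]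

section Norms

variable {n : ℕ}

theorem l1_nonneg (v : Fin n → ℝ) : 0 ≤ l1 v :=
  sum_nonneg fun i _ => abs_nonneg (v i)

theorem l1_add_le (v w : Fin n → ℝ) : l1 (v + w) ≤ l1 v + l1 w := by
  simp only [l1, ← sum_add_distrib]
  exact sum_le_sum fun i _ => abs_add_le (v i) (w i)

theorem l1_smul (t : ℝ) (v : Fin n → ℝ) : l1 (t • v) = |t| * l1 v := by
  simp [l1, abs_mul, mul_sum]

theorem l1_restrict (S : Finset (Fin n)) (v : Fin n → ℝ) :
    l1 (restrict S v) = ∑ i ∈ S, |v i| := by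
  simp [l1, _root_.restrict, apply_ite, sum_ite_mem]

theorem l1_restrict_add_l1_restrict_compl (S : Finset (Fin n)) (v : Fin n → ℝ) :
    l1 (restrict S v) + l1 (restrict Sᶜ v) = l1 v := by
  rw [l1_restrict, l1_restrict, sum_add_sum_compl, l1]

theorem abs_le_linf (v : Fin n → ℝ) (i : Fin n) : |v i| ≤ linf v :=
  le_ciSup (f := fun i => |v i|) (Finite.bddAbove_range _) i

theorem dotProduct_le_l1_mul_linf (v w : Fin n → ℝ) : v ⬝ᵥ w ≤ l1 v * linf w := by
  rw [dotProduct, l1, sum_mul]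
  refine sum_le_sum fun i _ => ?_
  calc v i * w i ≤ |v i| * |w i| := by rw [← abs_mul]; exact le_abs_self _
    _ ≤ |v i| * linf w := mul_le_mul_of_nonneg_left (abs_le_linf w i) (abs_nonneg _)

theorem l1_sub_l1_add_le {S : Finset (Fin n)} {x : Fin n → ℝ} (hx : ∀ i ∉ S, x i = 0)
    (v : Fin n → ℝ) : l1 x - l1 (x + v) ≤ l1 (restrict S v) - l1 (restrict Sᶜ v) := by
  have hS : ∑ i ∈ S, (|x i| - |x i + v i|) ≤ ∑ i ∈ S, |v i| := by
    refine sum_le_sum fun i _ => ?_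
    simpa using abs_sub_abs_le_abs_sub (x i) (x i + v i)
  have hSc : ∑ i ∈ Sᶜ, (|x i| - |x i + v i|) = -∑ i ∈ Sᶜ, |v i| := by
    rw [← sum_neg_distrib]
    refine sum_congr rfl fun i hi => ?_
    simp [hx i (mem_compl.1 hi)]
  calc l1 x - l1 (x + v)
      = ∑ i ∈ S, (|x i| - |x i + v i|) + ∑ i ∈ Sᶜ, (|x i| - |x i + v i|) := by
        simp only [l1, Pi.add_apply, ← sum_add_sum_compl S, sum_sub_distrib]
        ring
    _ ≤ ∑ i ∈ S, |v i| - ∑ i ∈ Sᶜ, |v i| := by linarith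
    _ = l1 (restrict S v) - l1 (restrict Sᶜ v) := by rw [l1_restrict, l1_restrict]

end Norms

section Lasso

variable {n : ℕ} {A : Matrix (Fin n) (Fin n) ℝ}

theorem quadForm_add (hA : A.IsSymm) (x w : Fin n → ℝ) :
    (x + w) ⬝ᵥ A *ᵥ (x + w) = x ⬝ᵥ A *ᵥ x + 2 * (w ⬝ᵥ A *ᵥ x) + w ⬝ᵥ A *ᵥ w := by
  have hsymm : x ⬝ᵥ A *ᵥ w = w ⬝ᵥ A *ᵥ x := by
    rw [dotProduct_mulVec, ← mulVec_transpose, hA.eq, dotProduct_comm]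
  simp only [mulVec_add, add_dotProduct, dotProduct_add, hsymm]
  ring

noncomputable def lassoObjective (A : Matrix (Fin n) (Fin n) ℝ) (γ : Fin n → ℝ) (lam : ℝ)
    (β : Fin n → ℝ) : ℝ :=
  -2 * (β ⬝ᵥ γ) + β ⬝ᵥ A *ᵥ β + lam * l1 β

theorem lassoObjective_add (hA : A.IsSymm) (γ : Fin n → ℝ) (lam : ℝ) (x w : Fin n → ℝ) :
    lassoObjective A γ lam (x + w) = lassoObjective A γ lam x - 2 * (w ⬝ᵥ (γ - A *ᵥ x))
      + w ⬝ᵥ A *ᵥ w + lam * (l1 (x + w) - l1 x) := by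
  simp only [lassoObjective, quadForm_add hA, add_dotProduct, dotProduct_sub]
  ring

theorem quadForm_nonneg_of_isMin_lassoObjective (hA : A.IsSymm) {γ : Fin n → ℝ} {lam : ℝ}
    (hlam : 0 ≤ lam) {βhat : Fin n → ℝ}
    (hmin : ∀ β, lassoObjective A γ lam βhat ≤ lassoObjective A γ lam β)
    (w : Fin n → ℝ) : 0 ≤ w ⬝ᵥ A *ᵥ w := by
  refine nonneg_of_forall_pos_mul_add_sq_mul_nonneg
    (a := -2 * (w ⬝ᵥ (γ - A *ᵥ βhat)) + lam * l1 w) fun t ht => ?_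
  have hgrow := hmin (βhat + t • w)
  have hpen : l1 (βhat + t • w) ≤ l1 βhat + t * l1 w := by
    simpa [l1_smul, abs_of_pos ht] using l1_add_le βhat (t • w)
  rw [lassoObjective_add hA] at hgrow
  simp only [dotProduct_smul, smul_dotProduct, mulVec_smul, smul_eq_mul] at hgrow
  nlinarith [mul_le_mul_of_nonneg_left hpen hlam]

theorem lasso_basic_inequality (hA : A.IsSymm) {γ : Fin n → ℝ} {lam : ℝ} (hlam : 0 ≤ lam)
    {S : Finset (Fin n)} {βstar βhat : Fin n → ℝ} (hsupp : ∀ i ∉ S, βstar i = 0)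
    (hdev : linf (γ - A *ᵥ βstar) ≤ lam / 4)
    (hmin : lassoObjective A γ lam βhat ≤ lassoObjective A γ lam βstar) :
    (βhat - βstar) ⬝ᵥ A *ᵥ (βhat - βstar) ≤
      3 * lam / 2 * l1 (restrict S (βhat - βstar)) - lam / 2 * l1 (restrict Sᶜ (βhat - βstar)) := by
  set v := βhat - βstar
  have hβhat : βhat = βstar + v := by simp [v]
  have hlin : v ⬝ᵥ (γ - A *ᵥ βstar) ≤ l1 v * (lam / 4) :=
    (dotProduct_le_l1_mul_linf _ _).trans (mul_le_mul_of_nonneg_left hdev (l1_nonneg v))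
  have hpen := l1_sub_l1_add_le hsupp v
  have hsplit := l1_restrict_add_l1_restrict_compl S v
  rw [hβhat, lassoObjective_add hA] at hmin
  rw [← hβhat] at hpen hmin
  nlinarith [mul_le_mul_of_nonneg_left hpen hlam]

end Lasso

theorem stmt_3_general {p : ℕ} (Gam : Matrix (Fin p) (Fin p) ℝ) (hGam : Gam.IsSymm)
    (γ βstar βhat : Fin p → ℝ) (lam : ℝ) (hlam : 0 < lam)
    (S : Finset (Fin p)) (hS : ∀ i, βstar i ≠ 0 ↔ i ∈ S)
    (hdev : linf (fun i => γ i - Gam.mulVec βstar i) ≤ lam / 4)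
    (hmin : ∀ β : Fin p → ℝ,
      -2 * (βhat ⬝ᵥ γ) + βhat ⬝ᵥ Gam.mulVec βhat + lam * l1 βhat ≤
      -2 * (β ⬝ᵥ γ) + β ⬝ᵥ Gam.mulVec β + lam * l1 β) :
    (0 ≤ (βhat - βstar) ⬝ᵥ Gam.mulVec (βhat - βstar) ∧
      (βhat - βstar) ⬝ᵥ Gam.mulVec (βhat - βstar) ≤
        3 * lam / 2 * l1 (restrict S (βhat - βstar)) -
          lam / 2 * l1 (restrict Sᶜ (βhat - βstar))) ∧
    l1 (restrict Sᶜ (βhat - βstar)) ≤ 3 * l1 (restrict S (βhat - βstar)) := by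
  have hsupp : ∀ i ∉ S, βstar i = 0 := fun i hi => not_not.1 (mt (hS i).1 hi)
  have hcurv := quadForm_nonneg_of_isMin_lassoObjective hGam hlam.le hmin (βhat - βstar)
  have hbasic := lasso_basic_inequality hGam hlam.le hsupp hdev (hmin βstar)
  refine ⟨⟨hcurv, hbasic⟩, ?_⟩
  nlinarith

theorem stmt_3 {p : ℕ} (Gam : Matrix (Fin p) (Fin p) ℝ) (hGam : Gam.IsSymm)
    (γ βstar βhat : Fin p → ℝ) (lam : ℝ) (hlam : 0 < lam)
    (S : Finset (Fin p)) (hS : ∀ i, βstar i ≠ 0 ↔ i ∈ S)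
    (hdev : linf (fun i => γ i - Gam.mulVec βstar i) ≤ lam / 4)
    (hpsd : ∀ w : Fin p → ℝ, l1 (restrict Sᶜ w) ≤ 3 * l1 (restrict S w) →
      0 ≤ w ⬝ᵥ Gam.mulVec w)
    (hmin : ∀ β : Fin p → ℝ,
      -2 * (βhat ⬝ᵥ γ) + βhat ⬝ᵥ Gam.mulVec βhat + lam * l1 βhat ≤
      -2 * (β ⬝ᵥ γ) + β ⬝ᵥ Gam.mulVec β + lam * l1 β) :
    (0 ≤ (βhat - βstar) ⬝ᵥ Gam.mulVec (βhat - βstar) ∧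
      (βhat - βstar) ⬝ᵥ Gam.mulVec (βhat - βstar) ≤
        3 * lam / 2 * l1 (restrict S (βhat - βstar)) -
          lam / 2 * l1 (restrict Sᶜ (βhat - βstar))) ∧
    l1 (restrict Sᶜ (βhat - βstar)) ≤ 3 * l1 (restrict S (βhat - βstar)) :=
  stmt_3_general Gam hGam γ βstar βhat lam hlam S hS hdev hmin
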